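/- Let {B_N} be a sequence of natural numbers such that for every d ∈ ℕ there exists N_0 ∈ ℕ with d | B_N for all N > N_0. Let A_1, A_2, A_3, ... be pairwise disjoint Buck measurable subsets of ℕ, and suppose there exists a convergent series Σ_{n=1}^∞ c_n with positive terms such that R(A_n : B_N)/B_N ≤ c_n for all n, N ∈ ℕ. Then A = ⋃_{n=1}^∞ A_n is Buck measurable and μ(A) = Σ_{n=1}^∞ μ(A_n). -/

import Mathlib

open scoped BigOperators

/-- Buck's measure density: the infimum of `∑ 1/mᵢ` over finite covers of `S`
by arithmetic progressions `{n | n ≡ rᵢ [MOD mᵢ]}`. -/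
noncomputable def buckDensity (S : Set ℕ) : ℝ :=
  sInf {x : ℝ | ∃ (k : ℕ) (r m : Fin k → ℕ), (∀ i, 0 < m i) ∧
    (S ⊆ ⋃ i, {n : ℕ | n ≡ r i [MOD m i]}) ∧ x = ∑ i, (1 : ℝ) / (m i)}

/-- A set is Buck measurable if `μ*(S) + μ*(ℕ \ S) = 1`. -/
def BuckMeasurable (S : Set ℕ) : Prop :=
  buckDensity S + buckDensity Sᶜ = 1

/-- `R(S : m)`: the number of residue classes modulo `m` occupied by `S`. -/
noncomputable def residueCount (S : Set ℕ) (m : ℕ) : ℕ :=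
  ((fun s => s % m) '' S).ncard

/-!
Buck's outer density is only finitely subadditive, so the content lies in the two inequalities
`μ*(A) ≤ ∑ μ(Aₙ)` and `μ*(ℕ \ A) ≤ 1 - ∑ μ(Aₙ)`, which together with `μ*(A) + μ*(ℕ \ A) ≥ 1`
force equality. For the first, a single modulus `M = B_N` suffices: the tail `⋃_{n ≥ k} Aₙ` is
covered by its residue classes mod `M`, so its outer density is at most
`∑_{n ≥ k} R(Aₙ : M) / M → 0`. For the second, measurability of `Aₙ` yields, for every
sufficiently divisible `M`, a set of residues mod `M` whose classes lie inside `Aₙ` and whose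
relative size is nearly `μ(Aₙ)`; for disjoint `Aₙ` these residue sets are disjoint, and the
residues left over cover `ℕ \ A`.
-/

open Finset Filter Topology

def buckCoverSums (S : Set ℕ) : Set ℝ :=
  {x : ℝ | ∃ (k : ℕ) (r m : Fin k → ℕ), (∀ i, 0 < m i) ∧
    (S ⊆ ⋃ i, {n : ℕ | n ≡ r i [MOD m i]}) ∧ x = ∑ i, (1 : ℝ) / (m i)}

lemma buckCoverSums_nonempty (S : Set ℕ) : (buckCoverSums S).Nonempty :=
  ⟨1, 1, fun _ => 0, fun _ => 1, fun _ => one_pos,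
    fun n _ => Set.mem_iUnion.2 ⟨0, Nat.modEq_one⟩, by simp⟩

lemma buckDensity_nonneg (S : Set ℕ) : 0 ≤ buckDensity S :=
  Real.sInf_nonneg fun _ ⟨_, _, _, _, _, hx⟩ => hx ▸ by positivity

lemma buckDensity_le_of_cover {S : Set ℕ} {k : ℕ} {r m : Fin k → ℕ} (hm : ∀ i, 0 < m i)
    (hcov : S ⊆ ⋃ i, {n : ℕ | n ≡ r i [MOD m i]}) :
    buckDensity S ≤ ∑ i, (1 : ℝ) / (m i) :=
  csInf_le ⟨0, fun _ ⟨_, _, _, _, _, hx⟩ => hx ▸ by positivity⟩ ⟨k, r, m, hm, hcov, rfl⟩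

lemma exists_cover_lt_of_buckDensity_lt {S : Set ℕ} {x : ℝ} (hx : buckDensity S < x) :
    ∃ (k : ℕ) (r m : Fin k → ℕ), (∀ i, 0 < m i) ∧
      (S ⊆ ⋃ i, {n : ℕ | n ≡ r i [MOD m i]}) ∧ ∑ i, (1 : ℝ) / (m i) < x := by
  obtain ⟨_, ⟨k, r, m, hm, hcov, rfl⟩, hlt⟩ := exists_lt_of_csInf_lt (buckCoverSums_nonempty S) hx
  exact ⟨k, r, m, hm, hcov, hlt⟩

lemma buckDensity_mono {S T : Set ℕ} (h : S ⊆ T) : buckDensity S ≤ buckDensity T :=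
  le_csInf (buckCoverSums_nonempty T) fun _ ⟨_, _, _, hm, hcov, hx⟩ =>
    hx ▸ buckDensity_le_of_cover hm (h.trans hcov)

lemma buckDensity_empty : buckDensity ∅ = 0 :=
  le_antisymm
    ((buckDensity_le_of_cover (r := Fin.elim0) (m := Fin.elim0) (fun i => i.elim0)
      (Set.empty_subset _)).trans_eq (by simp))
    (buckDensity_nonneg ∅)

lemma buckDensity_union_le (S T : Set ℕ) :
    buckDensity (S ∪ T) ≤ buckDensity S + buckDensity T := by
  refine le_of_forall_pos_lt_add fun ε hε => ?_
  obtain ⟨k₁, r₁, m₁, hm₁, hcov₁, hlt₁⟩ :=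
    exists_cover_lt_of_buckDensity_lt (lt_add_of_pos_right (buckDensity S) (half_pos hε))
  obtain ⟨k₂, r₂, m₂, hm₂, hcov₂, hlt₂⟩ :=
    exists_cover_lt_of_buckDensity_lt (lt_add_of_pos_right (buckDensity T) (half_pos hε))
  have hm : ∀ i, 0 < Fin.append m₁ m₂ i :=
    Fin.addCases (by simpa using hm₁) (by simpa using hm₂)
  have hcov : S ∪ T ⊆ ⋃ i, {n : ℕ | n ≡ Fin.append r₁ r₂ i [MOD Fin.append m₁ m₂ i]} := by
    rintro s (hs | hs)
    · obtain ⟨i, hi⟩ := Set.mem_iUnion.1 (hcov₁ hs)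
      exact Set.mem_iUnion.2 ⟨Fin.castAdd k₂ i, by simpa using hi⟩
    · obtain ⟨i, hi⟩ := Set.mem_iUnion.1 (hcov₂ hs)
      exact Set.mem_iUnion.2 ⟨Fin.natAdd k₁ i, by simpa using hi⟩
  have hsum := buckDensity_le_of_cover hm hcov
  rw [Fin.sum_univ_add] at hsum
  simp only [Fin.append_left, Fin.append_right] at hsum
  linarith

lemma buckDensity_biUnion_le {ι : Type*} (t : Finset ι) (A : ι → Set ℕ) :
    buckDensity (⋃ i ∈ t, A i) ≤ ∑ i ∈ t, buckDensity (A i) :=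
  t.apply_union_le_sum buckDensity_empty (buckDensity_union_le _ _)

lemma card_filter_range_exists_modEq_le {k M : ℕ} {r m : Fin k → ℕ} (hm : ∀ i, 0 < m i)
    (hdvd : ∀ i, m i ∣ M) :
    (#{t ∈ range M | ∃ i, t ≡ r i [MOD m i]} : ℝ) ≤ M * ∑ i, (1 : ℝ) / (m i) := by
  classical
  have hcount : ∀ i, #{t ∈ range M | t ≡ r i [MOD m i]} = M / m i := fun i => by
    rw [← Nat.count_eq_card_filter_range, Nat.count_modEq_card _ (hm i),
      Nat.mod_eq_zero_of_dvd (hdvd i)]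
    simp
  have hsub : {t ∈ range M | ∃ i, t ≡ r i [MOD m i]} ⊆
      univ.biUnion fun i => {t ∈ range M | t ≡ r i [MOD m i]} := by
    intro t ht
    obtain ⟨htM, i, hi⟩ := mem_filter.1 ht
    exact mem_biUnion.2 ⟨i, mem_univ i, mem_filter.2 ⟨htM, hi⟩⟩
  calc (#{t ∈ range M | ∃ i, t ≡ r i [MOD m i]} : ℝ)
      ≤ ∑ i, (#{t ∈ range M | t ≡ r i [MOD m i]} : ℝ) := by
        exact_mod_cast (card_le_card hsub).trans card_biUnion_le
    _ = M * ∑ i, (1 : ℝ) / (m i) := by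
        rw [mul_sum]
        refine sum_congr rfl fun i _ => ?_
        rw [hcount, Nat.cast_div (hdvd i) (by exact_mod_cast (hm i).ne'), mul_one_div]

lemma one_le_sum_of_univ_subset {k : ℕ} {r m : Fin k → ℕ} (hm : ∀ i, 0 < m i)
    (hcov : Set.univ ⊆ ⋃ i, {n : ℕ | n ≡ r i [MOD m i]}) :
    1 ≤ ∑ i, (1 : ℝ) / (m i) := by
  classical
  set M := ∏ i, m i
  have hM : (0 : ℝ) < M := by exact_mod_cast prod_pos fun i _ => hm i
  have hall : {t ∈ range M | ∃ i, t ≡ r i [MOD m i]} = range M :=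
    filter_true_of_mem fun t _ => Set.mem_iUnion.1 (hcov (Set.mem_univ t))
  have := card_filter_range_exists_modEq_le (r := r) hm fun i => dvd_prod_of_mem m (mem_univ i)
  rw [hall, card_range] at this
  exact le_of_mul_le_mul_left (by rwa [mul_one]) hM

lemma one_le_buckDensity_univ : 1 ≤ buckDensity Set.univ :=
  le_csInf (buckCoverSums_nonempty _) fun _ ⟨_, _, _, hm, hcov, hx⟩ =>
    hx ▸ one_le_sum_of_univ_subset hm hcov

lemma one_le_buckDensity_add_compl (S : Set ℕ) : 1 ≤ buckDensity S + buckDensity Sᶜ :=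
  calc 1 ≤ buckDensity Set.univ := one_le_buckDensity_univ
    _ = buckDensity (S ∪ Sᶜ) := by rw [Set.union_compl_self]
    _ ≤ buckDensity S + buckDensity Sᶜ := buckDensity_union_le S Sᶜ

lemma buckDensity_le_card_div {S : Set ℕ} {M : ℕ} (hM : 0 < M) {T : Finset ℕ}
    (h : ∀ s ∈ S, s % M ∈ T) : buckDensity S ≤ #T / M := by
  have hcov : S ⊆ ⋃ i : Fin #T, {n : ℕ | n ≡ (T.equivFin.symm i : ℕ) [MOD M]} := fun s hs =>
    Set.mem_iUnion.2 ⟨T.equivFin ⟨s % M, h s hs⟩, by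
      show s ≡ _ [MOD M]
      rw [Equiv.symm_apply_apply]
      exact (Nat.mod_modEq s M).symm⟩
  simpa [div_eq_mul_inv] using buckDensity_le_of_cover (fun _ => hM) hcov

lemma finite_image_mod (S : Set ℕ) {M : ℕ} (hM : 0 < M) : ((· % M) '' S).Finite :=
  (Set.finite_lt_nat M).subset <| Set.image_subset_iff.2 fun s _ => Nat.mod_lt s hM

lemma buckDensity_le_residueCount_div (S : Set ℕ) {M : ℕ} (hM : 0 < M) :
    buckDensity S ≤ residueCount S M / M := by
  rw [residueCount, Set.ncard_eq_toFinset_card _ (finite_image_mod S hM)]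
  exact buckDensity_le_card_div hM fun s hs => (Set.Finite.mem_toFinset _).2 ⟨s, hs, rfl⟩

lemma residueCount_iUnion_le_tsum {ι : Type*} {A : ι → Set ℕ} {M : ℕ} (hM : 0 < M)
    (hsum : Summable fun i => (residueCount (A i) M : ℝ)) :
    (residueCount (⋃ i, A i) M : ℝ) ≤ ∑' i, (residueCount (A i) M : ℝ) := by
  classical
  obtain ⟨I, hI, hsub⟩ := Set.finite_subset_iUnion (finite_image_mod (⋃ i, A i) hM)
    (Set.image_iUnion.subset)
  have hfin : (⋃ i ∈ hI.toFinset, (· % M) '' A i).Finite :=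
    (finite_image_mod (⋃ i, A i) hM).subset
      (Set.iUnion₂_subset fun i _ => Set.image_mono (Set.subset_iUnion A i))
  calc (residueCount (⋃ i, A i) M : ℝ)
      ≤ ((⋃ i ∈ hI.toFinset, (· % M) '' A i).ncard : ℝ) := by
        exact_mod_cast Set.ncard_le_ncard (by simpa using hsub) hfin
    _ ≤ ∑ i ∈ hI.toFinset, (residueCount (A i) M : ℝ) := by
        exact_mod_cast hI.toFinset.set_ncard_biUnion_le _
    _ ≤ ∑' i, (residueCount (A i) M : ℝ) :=
        hsum.sum_le_tsum _ fun _ _ => Nat.cast_nonneg _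

lemma iUnion_subset_biUnion_range_union_iUnion_add (A : ℕ → Set ℕ) (k : ℕ) :
    ⋃ n, A n ⊆ (⋃ n ∈ range k, A n) ∪ ⋃ n, A (n + k) := by
  intro s hs
  obtain ⟨n, hn⟩ := Set.mem_iUnion.1 hs
  rcases lt_or_ge n k with h | h
  · exact Or.inl (Set.mem_biUnion (mem_range.2 h) hn)
  · exact Or.inr (Set.mem_iUnion.2 ⟨n - k, by rwa [Nat.sub_add_cancel h]⟩)

theorem buckDensity_iUnion_le_tsum {A : ℕ → Set ℕ} {M : ℕ} (hM : 0 < M)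
    (hsum : Summable fun n => (residueCount (A n) M : ℝ) / M) :
    buckDensity (⋃ n, A n) ≤ ∑' n, buckDensity (A n) := by
  set ρ := fun n => (residueCount (A n) M : ℝ) / M
  have hdsum : Summable fun n => buckDensity (A n) :=
    hsum.of_nonneg_of_le (fun n => buckDensity_nonneg _)
      fun n => buckDensity_le_residueCount_div _ hM
  have htail : ∀ k, buckDensity (⋃ n, A (n + k)) ≤ ∑' n, ρ (n + k) := fun k => by
    have hsumk : Summable fun n => (residueCount (A (n + k)) M : ℝ) :=
      (((summable_nat_add_iff k).2 hsum).mul_right (M : ℝ)).congr fun n =>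
        div_mul_cancel₀ _ (by positivity)
    calc buckDensity (⋃ n, A (n + k)) ≤ residueCount (⋃ n, A (n + k)) M / M :=
          buckDensity_le_residueCount_div _ hM
      _ ≤ (∑' n, (residueCount (A (n + k)) M : ℝ)) / M := by
          gcongr; exact residueCount_iUnion_le_tsum hM hsumk
      _ = ∑' n, ρ (n + k) := tsum_div_const.symm
  have hbound : ∀ k, buckDensity (⋃ n, A n) ≤
      ∑ n ∈ range k, buckDensity (A n) + ∑' n, ρ (n + k) := fun k =>
    calc buckDensity (⋃ n, A n)
        ≤ buckDensity ((⋃ n ∈ range k, A n) ∪ ⋃ n, A (n + k)) :=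
          buckDensity_mono (iUnion_subset_biUnion_range_union_iUnion_add A k)
      _ ≤ buckDensity (⋃ n ∈ range k, A n) + buckDensity (⋃ n, A (n + k)) :=
          buckDensity_union_le _ _
      _ ≤ _ := add_le_add (buckDensity_biUnion_le _ _) (htail k)
  have hlim := hdsum.hasSum.tendsto_sum_nat.add (tendsto_sum_nat_add ρ)
  rw [add_zero] at hlim
  exact ge_of_tendsto' hlim hbound

theorem BuckMeasurable.exists_residues_subset {S : Set ℕ} (hS : BuckMeasurable S) {ε : ℝ}
    (hε : 0 < ε) :
    ∃ m > 0, ∀ M, 0 < M → m ∣ M → ∃ G ⊆ range M,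
      (∀ s, s % M ∈ G → s ∈ S) ∧ M * (buckDensity S - ε) ≤ #G := by
  classical
  obtain ⟨k, r, m, hm, hcov, hlt⟩ :=
    exists_cover_lt_of_buckDensity_lt (lt_add_of_pos_right (buckDensity Sᶜ) hε)
  refine ⟨∏ i, m i, prod_pos fun i _ => hm i, fun M hM hdvd => ?_⟩
  have hdvd' : ∀ i, m i ∣ M := fun i => (dvd_prod_of_mem m (mem_univ i)).trans hdvd
  refine ⟨{t ∈ range M | ¬ ∃ i, t ≡ r i [MOD m i]}, filter_subset _ _, fun s hs => ?_, ?_⟩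
  · by_contra hsS
    obtain ⟨i, hi⟩ := Set.mem_iUnion.1 (hcov hsS)
    exact (mem_filter.1 hs).2 ⟨i, ((Nat.mod_modEq s M).of_dvd (hdvd' i)).trans hi⟩
  · have hsplit := card_filter_add_card_filter_not (s := range M)
      (fun t => ∃ i, t ≡ r i [MOD m i])
    rw [card_range] at hsplit
    have hcovered := card_filter_range_exists_modEq_le (r := r) hm hdvd'
    have hweight := mul_le_mul_of_nonneg_left hlt.le (Nat.cast_nonneg M : (0 : ℝ) ≤ M)
    have hcast : (M : ℝ) = #{t ∈ range M | ∃ i, t ≡ r i [MOD m i]} +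
        #{t ∈ range M | ¬ ∃ i, t ≡ r i [MOD m i]} := by exact_mod_cast hsplit.symm
    unfold BuckMeasurable at hS
    nlinarith

theorem buckDensity_compl_biUnion_le {ι : Type*} {A : ι → Set ℕ} (t : Finset ι)
    (hdisj : (t : Set ι).PairwiseDisjoint A) (hmeas : ∀ i ∈ t, BuckMeasurable (A i)) :
    buckDensity (⋃ i ∈ t, A i)ᶜ ≤ 1 - ∑ i ∈ t, buckDensity (A i) := by
  classical
  refine le_of_forall_pos_le_add fun ε hε => ?_
  set δ := ε / (#t + 1)
  have hδ : 0 < δ := by positivity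
  have htδ : #t * δ ≤ ε := by
    rw [mul_div_assoc', div_le_iff₀ (by positivity)]
    nlinarith
  choose! m hm hG using fun i hi => (hmeas i hi).exists_residues_subset hδ
  set M := ∏ i ∈ t, m i
  have hM : 0 < M := prod_pos hm
  choose! G hGM hGA hGcard using fun i hi => hG i hi M hM (dvd_prod_of_mem m hi)
  have hGdisj : (t : Set ι).PairwiseDisjoint G := fun i hi j hj hij =>
    disjoint_left.2 fun x hxi hxj => by
      have hx : x % M = x := Nat.mod_eq_of_lt (mem_range.1 (hGM i hi hxi))
      exact Set.disjoint_left.1 (hdisj hi hj hij) (hGA i hi x (by rwa [hx]))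
        (hGA j hj x (by rwa [hx]))
  set H := range M \ t.biUnion G
  have hcov : ∀ s ∈ (⋃ i ∈ t, A i)ᶜ, s % M ∈ H := fun s hs => by
    refine mem_sdiff.2 ⟨mem_range.2 (Nat.mod_lt s hM), fun hsG => hs ?_⟩
    obtain ⟨i, hi, hsi⟩ := mem_biUnion.1 hsG
    exact Set.mem_biUnion hi (hGA i hi s hsi)
  have hH : (#H : ℝ) + ∑ i ∈ t, (#(G i) : ℝ) = M := by
    have := card_sdiff_add_card_eq_card (biUnion_subset.2 hGM)
    rw [card_biUnion hGdisj, card_range] at this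
    exact_mod_cast this
  have hGsum := sum_le_sum hGcard
  rw [← mul_sum, sum_sub_distrib, sum_const, nsmul_eq_mul] at hGsum
  have hMpos : (0 : ℝ) < M := by exact_mod_cast hM
  calc buckDensity (⋃ i ∈ t, A i)ᶜ ≤ #H / M := buckDensity_le_card_div hM hcov
    _ ≤ 1 - ∑ i ∈ t, buckDensity (A i) + ε := by
      rw [div_le_iff₀ hMpos]
      nlinarith

theorem buckDensity_compl_iUnion_le {A : ℕ → Set ℕ} (hdisj : Pairwise (Function.onFun Disjoint A))
    (hmeas : ∀ n, BuckMeasurable (A n)) (hsum : Summable fun n => buckDensity (A n)) :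
    buckDensity (⋃ n, A n)ᶜ ≤ 1 - ∑' n, buckDensity (A n) :=
  ge_of_tendsto' (tendsto_const_nhds.sub hsum.hasSum.tendsto_sum_nat) fun k =>
    (buckDensity_mono (Set.compl_subset_compl.2 (Set.iUnion₂_subset_iUnion _ A))).trans
      (buckDensity_compl_biUnion_le (range k) (hdisj.set_pairwise _) fun n _ => hmeas n)

theorem stmt_7_general (B : ℕ → ℕ) (hBpos : ∀ N, 0 < B N)
    (A : ℕ → Set ℕ) (hdisj : Pairwise (Function.onFun Disjoint A))
    (hmeas : ∀ n, BuckMeasurable (A n))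
    (c : ℕ → ℝ) (hcsum : Summable c)
    (hbound : ∀ n N, (residueCount (A n) (B N) : ℝ) / (B N : ℝ) ≤ c n) :
    BuckMeasurable (⋃ n, A n) ∧
      HasSum (fun n => buckDensity (A n)) (buckDensity (⋃ n, A n)) := by
  have hρ : Summable fun n => (residueCount (A n) (B 0) : ℝ) / B 0 :=
    hcsum.of_nonneg_of_le (fun n => by positivity) fun n => hbound n 0
  have hd : Summable fun n => buckDensity (A n) :=
    hρ.of_nonneg_of_le (fun n => buckDensity_nonneg _)
      fun n => buckDensity_le_residueCount_div _ (hBpos 0)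
  have hupper := buckDensity_iUnion_le_tsum (hBpos 0) hρ
  have hcompl := buckDensity_compl_iUnion_le hdisj hmeas hd
  have hone := one_le_buckDensity_add_compl (⋃ n, A n)
  have hU : buckDensity (⋃ n, A n) = ∑' n, buckDensity (A n) := by linarith
  refine ⟨?_, hU ▸ hd.hasSum⟩
  unfold BuckMeasurable
  linarith

theorem stmt_7 (B : ℕ → ℕ) (hBpos : ∀ N, 0 < B N)
    (hB : ∀ d : ℕ, ∃ N₀ : ℕ, ∀ N > N₀, d ∣ B N)
    (A : ℕ → Set ℕ) (hdisj : Pairwise (Function.onFun Disjoint A))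
    (hmeas : ∀ n, BuckMeasurable (A n))
    (c : ℕ → ℝ) (hcpos : ∀ n, 0 < c n) (hcsum : Summable c)
    (hbound : ∀ n N, (residueCount (A n) (B N) : ℝ) / (B N : ℝ) ≤ c n) :
    BuckMeasurable (⋃ n, A n) ∧
      HasSum (fun n => buckDensity (A n)) (buckDensity (⋃ n, A n)) :=
  stmt_7_general B hBpos A hdisj hmeas c hcsum hbound
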